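/- Let g be continuous, odd, with g = g₁ − g₂, g₁(s)/s → 0 as s → 0⁺ and g₂(s) ≥ ms for s ≥ 0, m > 0. If ũ ∈ H¹(ℝ^N)\{0} satisfies g(ũ(x)) = 0 for a.e. x ∈ ℝ^N, then a contradiction follows; i.e., θ := ψ(ũ)^{-1}∫ g(ũ)ũ dx ≠ 0 whenever ũ ≠ 0 solves −θΔũ = g(ũ) weakly with this θ. -/

import Mathlib

open MeasureTheory Filter Topology

noncomputable section

/-- Membership in `H¹(ℝ^N)` via the translation characterization:
`v ∈ L²` and `‖v(·+h) − v‖_{L²} ≤ C|h|` for all `h`. -/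
def MemH1Q (N : ℕ) (v : EuclideanSpace ℝ (Fin N) → ℝ) : Prop :=
  MemLp v 2 volume ∧
  ∃ C : ℝ, ∀ h : EuclideanSpace ℝ (Fin N),
    (∫ x, (v (x + h) - v x) ^ 2) ≤ C * ‖h‖ ^ 2

/-! Near `0⁺` we have `g₁ s < m s ≤ g₂ s`, so `g < 0` on some `(0, δ)` and, `g` being odd, `g ≠ 0`
on `(-δ, 0)`; hence `|ũ| ∈ {0} ∪ [δ, ∞)` almost everywhere. The set `A = {|ũ| ≥ δ}` has finite
measure, and the translation estimate gives `δ² |A \ (A - h)| ≤ C |h|²`. The defect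
`h ↦ |A \ (A - h)|` is subadditive, so `|A \ (A - H)| ≤ n |A \ (A - H/n)| ≤ C |H|² / (n δ²) → 0`:
`A` is translation invariant up to null sets. Such a set of finite measure is null, for otherwise
it would meet infinitely many disjoint translates of a ball in the same positive measure. -/

theorem eventually_lt_of_tendsto_div_nhdsGT {g₁ g₂ : ℝ → ℝ} {m : ℝ} (hm : 0 < m)
    (hg₁ : Tendsto (fun s => g₁ s / s) (𝓝[>] 0) (𝓝 0)) (hg₂ : ∀ s ≥ 0, m * s ≤ g₂ s) :
    ∀ᶠ s in 𝓝[>] 0, g₁ s < g₂ s := by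
  filter_upwards [hg₁.eventually (gt_mem_nhds hm), self_mem_nhdsWithin] with s hs (hs0 : 0 < s)
  calc g₁ s = g₁ s / s * s := by field_simp
    _ < m * s := by gcongr
    _ ≤ g₂ s := hg₂ s hs0.le

theorem Function.Odd.exists_pos_forall_eq_zero_or_le_abs {g : ℝ → ℝ} (hodd : g.Odd)
    (hg : ∀ᶠ s in 𝓝[>] 0, g s ≠ 0) : ∃ δ > 0, ∀ s, g s = 0 → s = 0 ∨ δ ≤ |s| := by
  obtain ⟨δ, hδ, hsub⟩ := mem_nhdsGT_iff_exists_Ioo_subset.1 hg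
  refine ⟨δ, hδ, fun s hs => or_iff_not_imp_right.2 fun hlt => ?_⟩
  rw [not_le, abs_lt] at hlt
  by_contra hs0
  rcases lt_or_gt_of_ne hs0 with hneg | hpos
  · exact hsub ⟨neg_pos.2 hneg, by linarith⟩ (by rw [hodd, hs, neg_zero])
  · exact hsub ⟨hpos, hlt.2⟩ hs

theorem le_zero_of_subadditive_of_le_mul_norm_sq {E : Type*} [SeminormedAddCommGroup E]
    [NormedSpace ℝ E] {d : E → ℝ} {C : ℝ} (hsub : ∀ v w, d (v + w) ≤ d v + d w)
    (hC : ∀ h, d h ≤ C * ‖h‖ ^ 2) (H : E) : d H ≤ 0 := by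
  have hnsmul : ∀ (n : ℕ) h, d ((n + 1) • h) ≤ (n + 1) * d h := by
    intro n h
    induction n with
    | zero => simp
    | succ n ih =>
      rw [succ_nsmul]
      push_cast
      linarith [hsub ((n + 1) • h) h]
  have hbound : ∀ n : ℕ, d H ≤ C * ‖H‖ ^ 2 * (1 / ((n : ℝ) + 1)) := by
    intro n
    have hn : (0 : ℝ) < n + 1 := by positivity
    have hH : (n + 1) • (((n : ℝ) + 1)⁻¹ • H) = H := by
      rw [← Nat.cast_smul_eq_nsmul ℝ, smul_smul]
      push_cast
      rw [mul_inv_cancel₀ hn.ne', one_smul]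
    calc d H = d ((n + 1) • (((n : ℝ) + 1)⁻¹ • H)) := by rw [hH]
      _ ≤ (n + 1) * d (((n : ℝ) + 1)⁻¹ • H) := hnsmul n _
      _ ≤ (n + 1) * (C * ‖((n : ℝ) + 1)⁻¹ • H‖ ^ 2) := by gcongr; exact hC _
      _ = C * ‖H‖ ^ 2 * (1 / ((n : ℝ) + 1)) := by
        rw [norm_smul, norm_inv, Real.norm_of_nonneg hn.le]
        field_simp
  have hlim := tendsto_one_div_add_atTop_nhds_zero_nat.const_mul (C * ‖H‖ ^ 2)
  simpa using ge_of_tendsto' hlim hbound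

section AddGroup

variable {G : Type*} [AddGroup G] [MeasurableSpace G] [MeasurableAdd G] (μ : Measure G)
  [μ.IsAddRightInvariant]

theorem measure_diff_preimage_add_add_le (A : Set G) (v h : G) :
    μ (A \ (· + (v + h)) ⁻¹' A) ≤ μ (A \ (· + v) ⁻¹' A) + μ (A \ (· + h) ⁻¹' A) :=
  calc μ (A \ (· + (v + h)) ⁻¹' A)
      ≤ μ ((A \ (· + v) ⁻¹' A) ∪ (· + v) ⁻¹' (A \ (· + h) ⁻¹' A)) := by
        refine measure_mono fun x ⟨hxA, hx⟩ => ?_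
        by_cases hv : x + v ∈ A
        · exact Or.inr ⟨hv, by simpa [add_assoc] using hx⟩
        · exact Or.inl ⟨hxA, hv⟩
    _ ≤ μ (A \ (· + v) ⁻¹' A) + μ (A \ (· + h) ⁻¹' A) := by
        rw [← measure_preimage_add_right μ v (A \ (· + h) ⁻¹' A)]
        exact measure_union_le _ _

theorem measure_inter_preimage_add_le (A B : Set G) (c : G) :
    μ (A ∩ (· + c) ⁻¹' B) ≤ μ (A \ (· + c) ⁻¹' A) + μ (A ∩ B) :=
  calc μ (A ∩ (· + c) ⁻¹' B)
      ≤ μ ((A \ (· + c) ⁻¹' A) ∪ (· + c) ⁻¹' (A ∩ B)) := by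
        refine measure_mono fun x ⟨hxA, hxB⟩ => ?_
        by_cases hc : x + c ∈ A
        · exact Or.inr ⟨hc, hxB⟩
        · exact Or.inl ⟨hxA, hc⟩
    _ ≤ μ (A \ (· + c) ⁻¹' A) + μ (A ∩ B) := by
        rw [← measure_preimage_add_right μ c (A ∩ B)]
        exact measure_union_le _ _

variable {μ}

theorem mul_measureReal_diff_preimage_add_le_integral {f : G → ℝ} {A : Set G} {δ : ℝ}
    (hδ : 0 ≤ δ) (hA : MeasurableSet A) (hf : MemLp f 2 μ) (hfA : ∀ᵐ x ∂μ, x ∈ A → δ ≤ |f x|)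
    (hfAc : ∀ᵐ x ∂μ, x ∉ A → f x = 0) (h : G) :
    δ ^ 2 * μ.real (A \ (· + h) ⁻¹' A) ≤ ∫ x, (f (x + h) - f x) ^ 2 ∂μ := by
  have htrans := measurePreserving_add_right μ h
  have hfAc_add : ∀ᵐ x ∂μ, x + h ∉ A → f (x + h) = 0 := htrans.quasiMeasurePreserving.ae hfAc
  have hle : (A \ (· + h) ⁻¹' A).indicator (fun _ => δ ^ 2)
      ≤ᵐ[μ] fun x => (f (x + h) - f x) ^ 2 := by
    filter_upwards [hfA, hfAc_add] with x hxA hxh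
    by_cases hx : x ∈ A \ (· + h) ⁻¹' A
    · rw [Set.indicator_of_mem hx, hxh hx.2, zero_sub, neg_sq, ← sq_abs (f x)]
      exact pow_le_pow_left₀ hδ (hxA hx.1) 2
    · rw [Set.indicator_of_notMem hx]
      positivity
  calc δ ^ 2 * μ.real (A \ (· + h) ⁻¹' A)
      = ∫ x, (A \ (· + h) ⁻¹' A).indicator (fun _ => δ ^ 2) x ∂μ := by
        rw [integral_indicator_const _ (hA.diff (measurable_add_const h hA)), smul_eq_mul, mul_comm]
    _ ≤ ∫ x, (f (x + h) - f x) ^ 2 ∂μ :=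
        integral_mono_of_nonneg
          (.of_forall fun _ => Set.indicator_nonneg (fun _ _ => by positivity) _)
          ((hf.comp_measurePreserving htrans).sub hf).integrable_sq hle

end AddGroup

section NormedSpace

variable {E : Type*} [NormedAddCommGroup E] [NormedSpace ℝ E] [MeasurableSpace E]
  [BorelSpace E] {μ : Measure E} [μ.IsAddRightInvariant]

theorem measure_diff_preimage_add_eq_zero_of_le_mul_norm_sq {A : Set E} (hA : μ A ≠ ⊤) {C : ℝ}
    (hC : ∀ h, μ.real (A \ (· + h) ⁻¹' A) ≤ C * ‖h‖ ^ 2) (h : E) :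
    μ (A \ (· + h) ⁻¹' A) = 0 := by
  have hfin : ∀ v, μ (A \ (· + v) ⁻¹' A) ≠ ⊤ := fun _ =>
    measure_ne_top_of_subset Set.sdiff_subset hA
  have hsub : ∀ v w, μ.real (A \ (· + (v + w)) ⁻¹' A)
      ≤ μ.real (A \ (· + v) ⁻¹' A) + μ.real (A \ (· + w) ⁻¹' A) := fun v w =>
    ENNReal.toReal_le_add (measure_diff_preimage_add_add_le μ A v w) (hfin v) (hfin w)
  exact (measureReal_eq_zero_iff (hfin h)).1
    (le_antisymm (le_zero_of_subadditive_of_le_mul_norm_sq hsub hC h) measureReal_nonneg)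

theorem measure_eq_zero_of_measure_diff_preimage_add_eq_zero [Nontrivial E] {A : Set E}
    (hAm : MeasurableSet A) (hA : μ A ≠ ⊤) (hinv : ∀ h, μ (A \ (· + h) ⁻¹' A) = 0) : μ A = 0 := by
  suffices hball : ∀ R > 0, μ (A ∩ Metric.ball 0 R) = 0 by
    rw [← Set.inter_univ A, ← Metric.iUnion_ball_nat_succ 0, Set.inter_iUnion]
    exact measure_iUnion_null fun n => hball _ n.cast_add_one_pos
  intro R hR
  obtain ⟨e, he⟩ := exists_norm_eq E (c := 2 * R) (by positivity)
  have hdisj :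
      Pairwise (Function.onFun Disjoint fun k : ℕ => A ∩ Metric.ball ((k : ℝ) • e) R) := by
    intro k j hkj
    refine Disjoint.inter_left' _ (Disjoint.inter_right' _ (Metric.ball_disjoint_ball ?_))
    have hkj' : (1 : ℝ) ≤ |(k : ℝ) - j| := by
      exact_mod_cast Int.one_le_abs (sub_ne_zero.2 (Nat.cast_injective.ne hkj))
    rw [dist_eq_norm, ← sub_smul, norm_smul, Real.norm_eq_abs, he]
    nlinarith
  have hle : ∀ k : ℕ, μ (A ∩ Metric.ball 0 R) ≤ μ (A ∩ Metric.ball ((k : ℝ) • e) R) := by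
    intro k
    have := measure_inter_preimage_add_le μ A (Metric.ball ((k : ℝ) • e) R) ((k : ℝ) • e)
    have hpre : (· + (k : ℝ) • e) ⁻¹' Metric.ball ((k : ℝ) • e) R = Metric.ball 0 R := by
      ext x
      simp [dist_eq_norm]
    rwa [hinv, zero_add, hpre] at this
  by_contra h0
  have htop : ∑' k : ℕ, μ (A ∩ Metric.ball ((k : ℝ) • e) R) = ⊤ :=
    eq_top_mono (ENNReal.tsum_le_tsum hle) (ENNReal.tsum_const_eq_top_of_ne_zero h0)
  rw [← measure_iUnion hdisj fun _ => hAm.inter Metric.isOpen_ball.measurableSet] at htop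
  exact hA (measure_eq_top_mono (Set.iUnion_subset fun _ => Set.inter_subset_left) htop)

theorem ae_eq_zero_of_ae_eq_zero_or_le_abs [Nontrivial E] {f : E → ℝ} (hf : MemLp f 2 μ) {C : ℝ}
    (hC : ∀ h, ∫ x, (f (x + h) - f x) ^ 2 ∂μ ≤ C * ‖h‖ ^ 2) {δ : ℝ} (hδ : 0 < δ)
    (hgap : ∀ᵐ x ∂μ, f x = 0 ∨ δ ≤ |f x|) : f =ᵐ[μ] 0 := by
  set w := hf.1.mk f
  have hfw : f =ᵐ[μ] w := hf.1.ae_eq_mk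
  set A := {x | δ ≤ |w x|}
  have hAm : MeasurableSet A :=
    measurableSet_le measurable_const hf.1.stronglyMeasurable_mk.measurable.abs
  have hAfin : μ A ≠ ⊤ := by
    refine ne_top_of_le_ne_top ((hf.ae_eq hfw).meas_ge_lt_top_enorm two_ne_zero ENNReal.ofNat_ne_top
      (ε := δ.toNNReal) (by simpa using hδ)).ne (measure_mono fun x (hx : δ ≤ |w x|) => ?_)
    change ENNReal.ofReal δ ≤ ‖w x‖ₑ
    rw [Real.enorm_eq_ofReal_abs]
    exact ENNReal.ofReal_le_ofReal hx
  have hfA : ∀ᵐ x ∂μ, x ∈ A → δ ≤ |f x| := hfw.mono fun x hx hxA => hx ▸ hxA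
  have hfAc : ∀ᵐ x ∂μ, x ∉ A → f x = 0 := by
    filter_upwards [hfw, hgap] with x hx hx0 hxA
    exact hx0.resolve_right (hx ▸ hxA)
  have hdefect : ∀ h, μ.real (A \ (· + h) ⁻¹' A) ≤ (C / δ ^ 2) * ‖h‖ ^ 2 := fun h => by
    rw [div_mul_eq_mul_div, le_div_iff₀ (by positivity), mul_comm]
    exact (mul_measureReal_diff_preimage_add_le_integral hδ.le hAm hf hfA hfAc h).trans (hC h)
  have hA0 := measure_eq_zero_of_measure_diff_preimage_add_eq_zero hAm hAfin
    (measure_diff_preimage_add_eq_zero_of_le_mul_norm_sq hAfin hdefect)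
  filter_upwards [measure_eq_zero_iff_ae_notMem.1 hA0, hfAc] with x hxA hx
  exact hx hxA

end NormedSpace

theorem g_of_u_ae_zero_contradiction_general (N : ℕ) (hN : 3 ≤ N)
    (g g₁ g₂ : ℝ → ℝ) (m : ℝ) (hm : 0 < m)
    (hgodd : ∀ s, g (-s) = - g s)
    (hsplit : ∀ s, g s = g₁ s - g₂ s)
    (hg₁0 : Tendsto (fun s => g₁ s / s) (𝓝[>] (0:ℝ)) (𝓝 0))
    (hg₂lin : ∀ s ≥ 0, m * s ≤ g₂ s)
    (u : EuclideanSpace ℝ (Fin N) → ℝ)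
    (hu : MemH1Q N u)
    (hnz : ¬ (u =ᵐ[volume] (fun _ => (0:ℝ))))
    (hg0 : ∀ᵐ x ∂volume, g (u x) = 0) : False := by
  have : Nontrivial (EuclideanSpace ℝ (Fin N)) :=
    Module.nontrivial_of_finrank_pos (R := ℝ) (by rw [finrank_euclideanSpace_fin]; omega)
  have hg_ne : ∀ᶠ s in 𝓝[>] 0, g s ≠ 0 :=
    (eventually_lt_of_tendsto_div_nhdsGT hm hg₁0 hg₂lin).mono fun s hs => by
      rw [hsplit]
      exact sub_ne_zero.2 hs.ne
  obtain ⟨δ, hδ, hgap⟩ := Function.Odd.exists_pos_forall_eq_zero_or_le_abs hgodd hg_ne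
  obtain ⟨hu₂, C, hC⟩ := hu
  exact hnz (ae_eq_zero_of_ae_eq_zero_or_le_abs hu₂ hC hδ (hg0.mono fun x hx => hgap _ hx))

/-- from the proof of Lemma 4.2: let `g = g₁ − g₂` be continuous and odd
with `g₁(s)/s → 0` as `s → 0⁺` and `g₂(s) ≥ m s` for `s ≥ 0`, `m > 0`. If a nonzero
`ũ ∈ H¹(ℝ^N)` satisfies `g(ũ(x)) = 0` for a.e. `x`, then a contradiction follows; in
particular the Lagrange-type number `θ = ψ(ũ)^{-1}∫ g(ũ)ũ` cannot vanish. -/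
theorem g_of_u_ae_zero_contradiction (N : ℕ) (hN : 3 ≤ N)
    (g g₁ g₂ : ℝ → ℝ) (m : ℝ) (hm : 0 < m)
    (hgcont : Continuous g) (hgodd : ∀ s, g (-s) = - g s)
    (hsplit : ∀ s, g s = g₁ s - g₂ s)
    (hg₁0 : Tendsto (fun s => g₁ s / s) (𝓝[>] (0:ℝ)) (𝓝 0))
    (hg₂lin : ∀ s ≥ 0, m * s ≤ g₂ s)
    (u : EuclideanSpace ℝ (Fin N) → ℝ)
    (hu : MemH1Q N u)
    (hnz : ¬ (u =ᵐ[volume] (fun _ => (0:ℝ))))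
    (hg0 : ∀ᵐ x ∂volume, g (u x) = 0) : False :=
  g_of_u_ae_zero_contradiction_general N hN g g₁ g₂ m hm hgodd hsplit hg₁0 hg₂lin u hu hnz hg0
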